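/- Let P be an irreflexive binary relation on ω. The following are equivalent: (1) there exists a continuous homomorphism from D_S to (ω,P); (2) there exists a continuous homomorphism from D_S to D_S restricted to Unf(P). -/

import Mathlib

/-- The space `[ω]^ω` of infinite subsets of `ω`, identified with their strictly
increasing enumerations, as a subspace of the Baire space `ℕ → ℕ`. -/
abbrev InfSub := {g : ℕ → ℕ // StrictMono g}

/-- The shift `S(X) = X ∖ {min X}`. -/
def shiftS (X : InfSub) : InfSub :=
  ⟨fun n => X.1 (n + 1), fun _ _ h => X.2 (Nat.succ_lt_succ h)⟩

/-- Edge relation of the directed shift graph `D_S`. -/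
def shiftEdge (X Y : InfSub) : Prop := X ≠ Y ∧ shiftS X = Y

/-- Edge relation of the symmetric shift graph `G_S`. -/
def shiftAdj (X Y : InfSub) : Prop := X ≠ Y ∧ (shiftS X = Y ∨ shiftS Y = X)

/-- `Unf(P)`: the set of `X` whose consecutive elements are `P`-related. -/
def UnfRel (P : ℕ → ℕ → Prop) : Set InfSub :=
  {X | ∀ i, P (X.1 i) (X.1 (i + 1))}

/-!
A continuous homomorphism `Φ` into `D_S ↾ Unf(P)` commutes with the shift, so `X ↦ min Φ(X)` is a
continuous homomorphism into `(ω, P)`. Conversely, given `φ`, the orbit map `X ↦ (φ(Sⁿ X))ₙ`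
works as soon as `φ(X) < φ(S X)` for all `X`. The set of such `X` is open, so by the
Galvin–Prikry theorem it contains or misses `[H]^ω` for some infinite `H`. It cannot miss it:
`P` is irreflexive, so `φ(Sⁿ X)` would be strictly decreasing. Composing `φ` with
`[ω]^ω ≅ [H]^ω`, which commutes with the shift, gives a homomorphism increasing along the shift.

Galvin–Prikry for an open set `U` is proved by combinatorial forcing: if no infinite set accepts
`∅`, a fusion sequence produces `H` such that every finite `s ⊆ H` is rejected by the part of
`H` above it, whereas a member of `U` inside `[H]^ω` would have an accepted initial segment.
-/

open Set Function PiNat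

lemma InfSub.apply_eq_of_forall_lt_card_mem {s : Finset ℕ} {X Y : InfSub}
    (hX : ∀ i < s.card, X.1 i ∈ s) (hY : ∀ i < s.card, Y.1 i ∈ s) {i : ℕ} (hi : i < s.card) :
    X.1 i = Y.1 i := by
  have key : ∀ Z : InfSub, (∀ i < s.card, Z.1 i ∈ s) →
      (fun j : Fin s.card => Z.1 j) = s.orderEmbOfFin rfl := fun Z hZ =>
    Finset.orderEmbOfFin_unique rfl (fun j => hZ j j.2) fun _ _ h => Z.2 h
  exact congrFun ((key X hX).trans (key Y hY).symm) ⟨i, hi⟩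

lemma InfSub.exists_cylinder_subset {U : Set InfSub} (hU : IsOpen U) {X : InfSub} (hX : X ∈ U) :
    ∃ m, ∀ Y : InfSub, Y.1 ∈ cylinder X.1 m → Y ∈ U := by
  obtain ⟨V, hV, rfl⟩ := isOpen_induced_iff.1 hU
  obtain ⟨_, ⟨x, m, rfl⟩, hXm, hsub⟩ :=
    (isTopologicalBasis_cylinders fun _ => ℕ).exists_subset_of_mem_open hX hV
  refine ⟨m, fun Y hY => hsub ?_⟩
  rwa [mem_cylinder_iff_eq.1 hXm] at hY

namespace GalvinPrikry

/-- The Ellentuck neighbourhood `[s, A]`. As `X` is increasing, the first condition says that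
`s` is an initial segment of `X`. -/
def ellentuckNbhd (s : Finset ℕ) (A : Set ℕ) : Set InfSub :=
  {X | (∀ i < s.card, X.1 i ∈ s) ∧ ∀ i, s.card ≤ i → X.1 i ∈ A}

def Accepts (U : Set InfSub) (A : Set ℕ) (s : Finset ℕ) : Prop := ellentuckNbhd s A ⊆ U

def Rejects (U : Set InfSub) (A : Set ℕ) (s : Finset ℕ) : Prop :=
  ∀ B ⊆ A, B.Infinite → ¬ Accepts U B s

variable {U : Set InfSub}

lemma Rejects.mono {s : Finset ℕ} {A B : Set ℕ} (hBA : B ⊆ A) (h : Rejects U A s) :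
    Rejects U B s :=
  fun C hC => h C (hC.trans hBA)

lemma accepts_of_isOpen (hU : IsOpen U) {X : InfSub} (hX : X ∈ U) :
    ∃ m, Accepts U (X.1 '' Ici m) ((Finset.range m).image X.1) := by
  obtain ⟨m, hm⟩ := InfSub.exists_cylinder_subset hU hX
  have hcard : ((Finset.range m).image X.1).card = m := by
    rw [Finset.card_image_of_injective _ X.2.injective, Finset.card_range]
  refine ⟨m, fun Y hY => hm Y (mem_cylinder_iff.2 fun i hi => ?_)⟩
  rw [← hcard] at hi
  exact InfSub.apply_eq_of_forall_lt_card_mem hY.1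
    (fun j hj => Finset.mem_image_of_mem _ (Finset.mem_range.2 (hcard ▸ hj))) hi

lemma exists_fusion_seq (Inv : Finset ℕ → Set ℕ → Prop) (R : ℕ → Set ℕ → Prop) {A : Set ℕ}
    (h₀ : Inv ∅ A) (step : ∀ F B, Inv F B → ∃ a ∈ B, ∃ C ⊆ B ∩ Ioi a, Inv (insert a F) C ∧ R a C) :
    ∃ (x : ℕ → ℕ) (C : ℕ → Set ℕ), StrictMono x ∧ Antitone C ∧
      ∀ n, Inv ((Finset.range n).image x) (C n) ∧ x n ∈ C n ∧ R (x n) (C (n + 1)) := by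
  choose! a ha next hnext hInv hR using step
  let q : ℕ → Finset ℕ × Set ℕ :=
    fun n => Nat.rec (∅, A) (fun _ p => (insert (a p.1 p.2) p.1, next p.1 p.2)) n
  let x : ℕ → ℕ := fun n => a (q n).1 (q n).2
  have hq : ∀ n, (q n).1 = (Finset.range n).image x ∧ Inv (q n).1 (q n).2 := by
    intro n
    induction n with
    | zero => exact ⟨rfl, h₀⟩
    | succ n ih =>
      refine ⟨?_, hInv _ _ ih.2⟩
      change insert (x n) (q n).1 = _
      rw [ih.1, Finset.range_add_one, Finset.image_insert]
  have hsucc : ∀ n, (q (n + 1)).2 ⊆ (q n).2 ∩ Ioi (x n) := fun n => hnext _ _ (hq n).2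
  have hx : ∀ n, x n ∈ (q n).2 := fun n => ha _ _ (hq n).2
  refine ⟨x, fun n => (q n).2, strictMono_nat_of_lt_succ fun n => (hsucc n (hx (n + 1))).2,
    antitone_nat_of_succ_le fun n => (hsucc n).trans inter_subset_left, fun n => ?_⟩
  exact ⟨(hq n).1 ▸ (hq n).2, hx n, hR _ _ (hq n).2⟩

lemma exists_rejects_insert {A : Set ℕ} {F : Finset ℕ} (hA : A.Infinite)
    (hFA : Disjoint (F : Set ℕ) A) (hrej : ∀ s ⊆ F, Rejects U A s) :
    ∃ a ∈ A, ∃ B ⊆ A ∩ Ioi a, B.Infinite ∧ ∀ s ⊆ F, Rejects U B (insert a s) := by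
  by_contra! h
  -- Otherwise there are `x₀ < x₁ < ⋯` in `A` with some `insert xₙ sₙ`, `sₙ ⊆ F`, accepted by a
  -- set containing all later `xₘ`; some `t` equals infinitely many `sₙ`, and these `xₙ` form an
  -- infinite subset of `A` accepting `t`.
  have step : ∀ (_ : Finset ℕ) (B : Set ℕ), B ⊆ A ∧ B.Infinite → ∃ a ∈ B, ∃ C ⊆ B ∩ Ioi a,
      (C ⊆ A ∧ C.Infinite) ∧ ∃ s ⊆ F, Accepts U C (insert a s) := by
    intro _ B ⟨hBA, hB⟩
    obtain ⟨a, ha⟩ := hB.nonempty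
    obtain ⟨s, hsF, hs⟩ := h a (hBA ha) (B ∩ Ioi a) (inter_subset_inter_left _ hBA)
      (hB.sdiff (finite_Iic a) |>.mono fun x hx => ⟨hx.1, by simpa using hx.2⟩)
    simp only [Rejects, not_forall, not_not] at hs
    obtain ⟨C, hC, hCi, hCs⟩ := hs
    exact ⟨a, ha, C, hC, ⟨hC.trans (inter_subset_inter_left _ hBA |>.trans inter_subset_left),
      hCi⟩, s, hsF, hCs⟩
  obtain ⟨x, B, hx, hB, hseq⟩ := exists_fusion_seq _ _ ⟨subset_rfl, hA⟩ step
  have hBA : ∀ n, B n ⊆ A := fun n => (hseq n).1.1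
  have hxB : ∀ n, x n ∈ B n := fun n => (hseq n).2.1
  choose s hsF hacc using fun n => (hseq n).2.2
  obtain ⟨t, htF, hK⟩ : ∃ t ⊆ F, {n | s n = t}.Infinite := by
    obtain ⟨t, ht⟩ := Finite.exists_infinite_fiber
      fun n => (⟨s n, Finset.mem_powerset.2 (hsF n)⟩ : F.powerset)
    refine ⟨t, Finset.mem_powerset.1 t.2, (infinite_coe_iff.1 ht).mono fun n hn => ?_⟩
    simpa [Subtype.ext_iff] using hn
  refine hrej t htF (x '' {n | s n = t}) (image_subset_iff.2 fun n _ => hBA n (hxB n))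
    (hK.image hx.injective.injOn) ?_
  intro X ⟨hXt, hXC⟩
  obtain ⟨k, hk, hXk⟩ := hXC t.card le_rfl
  have hxt : x k ∉ t := fun h => hFA.ne_of_mem (htF h) (hBA k (hxB k)) rfl
  have hcard : (insert (x k) t).card = t.card + 1 := Finset.card_insert_of_notMem hxt
  have hacck : Accepts U (B (k + 1)) (insert (x k) t) := (hk : s k = t) ▸ hacc k
  refine hacck ⟨fun i hi => ?_, fun i hi => ?_⟩
  · rcases (Nat.lt_succ_iff.1 (hcard ▸ hi)).lt_or_eq with hi | rfl
    · exact Finset.mem_insert_of_mem (hXt i hi)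
    · exact hXk ▸ Finset.mem_insert_self _ _
  · obtain ⟨j, -, hXj⟩ := hXC i (by omega)
    have hkj : k < j := hx.lt_iff_lt.1 (by rw [hXj, hXk]; exact X.2 (by omega))
    exact hXj ▸ hB hkj (hxB j)

lemma exists_rejects_subset_insert {A : Set ℕ} {F : Finset ℕ} (hA : A.Infinite)
    (hFA : Disjoint (F : Set ℕ) A) (hrej : ∀ s ⊆ F, Rejects U A s) :
    ∃ a ∈ A, ∃ B ⊆ A ∩ Ioi a, B.Infinite ∧ ∀ s ⊆ insert a F, Rejects U B s := by
  obtain ⟨a, ha, B, hBA, hB, hrej'⟩ := exists_rejects_insert hA hFA hrej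
  refine ⟨a, ha, B, hBA, hB, fun s hs => ?_⟩
  rw [Finset.subset_insert_iff] at hs
  by_cases has : a ∈ s
  · exact Finset.insert_erase has ▸ hrej' _ hs
  · rw [Finset.erase_eq_of_notMem has] at hs
    exact (hrej s hs).mono (hBA.trans inter_subset_left)

theorem exists_strictMono_forall_rejects (h₀ : Rejects U univ ∅) :
    ∃ x : ℕ → ℕ, StrictMono x ∧
      ∀ n, ∀ s ⊆ (Finset.range n).image x, Rejects U (x '' Ici n) s := by
  have step : ∀ (F : Finset ℕ) (B : Set ℕ),
      B.Infinite ∧ Disjoint (F : Set ℕ) B ∧ (∀ s ⊆ F, Rejects U B s) →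
      ∃ a ∈ B, ∃ C ⊆ B ∩ Ioi a, (C.Infinite ∧ Disjoint ((insert a F : Finset ℕ) : Set ℕ) C ∧
        ∀ s ⊆ insert a F, Rejects U C s) ∧ True := by
    rintro F B ⟨hB, hFB, hrej⟩
    obtain ⟨a, ha, C, hC, hCi, hrej'⟩ := exists_rejects_subset_insert hB hFB hrej
    refine ⟨a, ha, C, hC, ⟨hCi, ?_, hrej'⟩, trivial⟩
    rw [Finset.coe_insert, disjoint_insert_left]
    exact ⟨fun h => lt_irrefl a (hC h).2, hFB.mono_right (hC.trans inter_subset_left)⟩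
  obtain ⟨x, C, hx, hC, hseq⟩ := exists_fusion_seq _ _
    ⟨infinite_univ, by simp, fun s hs => by rwa [Finset.subset_empty.1 hs]⟩ step
  refine ⟨x, hx, fun n s hs => ((hseq n).1.2.2 s hs).mono ?_⟩
  rintro _ ⟨k, hk, rfl⟩
  exact hC hk (hseq k).2.1

end GalvinPrikry

def InfSub.image (e : ℕ ↪o ℕ) (X : InfSub) : InfSub := ⟨e ∘ X.1, e.strictMono.comp X.2⟩

open GalvinPrikry in
theorem IsOpen.exists_homogeneous {U : Set InfSub} (hU : IsOpen U) :
    ∃ e : ℕ ↪o ℕ, (∀ X, InfSub.image e X ∈ U) ∨ ∀ X, InfSub.image e X ∉ U := by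
  by_cases h₀ : Rejects U univ ∅
  · obtain ⟨x, hx, hrej⟩ := exists_strictMono_forall_rejects h₀
    refine ⟨OrderEmbedding.ofStrictMono x hx, Or.inr fun X hX => ?_⟩
    obtain ⟨m, hm⟩ := accepts_of_isOpen hU hX
    refine hrej (X.1 m) _ ?_ _ ?_ ((Ici_infinite m).image (InfSub.image _ X).2.injective.injOn) hm
    · intro y hy
      obtain ⟨i, hi, rfl⟩ := Finset.mem_image.1 hy
      exact Finset.mem_image_of_mem _ (Finset.mem_range.2 (X.2 (Finset.mem_range.1 hi)))
    · rintro _ ⟨i, hi, rfl⟩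
      exact ⟨X.1 i, X.2.monotone hi, rfl⟩
  · simp only [Rejects, not_forall, not_not] at h₀
    obtain ⟨B, -, hB, hacc⟩ := h₀
    exact ⟨OrderEmbedding.ofStrictMono _ (Nat.nth_strictMono hB),
      Or.inl fun X => hacc ⟨by simp, fun i _ => Nat.nth_mem_of_infinite hB _⟩⟩

lemma continuous_shiftS : Continuous shiftS :=
  continuous_induced_rng.2 <|
    continuous_pi fun n => (continuous_apply (n + 1)).comp continuous_subtype_val

lemma InfSub.continuous_image (e : ℕ ↪o ℕ) : Continuous (InfSub.image e) :=
  (continuous_pi fun n => continuous_of_discreteTopology.comp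
    ((continuous_apply n).comp continuous_subtype_val)).subtype_mk _

lemma shiftS_image (e : ℕ ↪o ℕ) (X : InfSub) :
    shiftS (InfSub.image e X) = InfSub.image e (shiftS X) :=
  rfl

lemma shiftS_ne_self (X : InfSub) : shiftS X ≠ X := fun h =>
  (X.2 zero_lt_one).ne' (congrArg (fun Y : InfSub => Y.1 0) h)

lemma shiftEdge_iff {X Y : InfSub} : shiftEdge X Y ↔ shiftS X = Y :=
  ⟨And.right, fun h => ⟨h ▸ (shiftS_ne_self X).symm, h⟩⟩

lemma exists_le_apply_shiftS (χ : InfSub → ℕ) : ∃ X, χ X ≤ χ (shiftS X) := by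
  by_contra! h
  exact not_strictAnti_of_wellFoundedLT (fun n => χ (shiftS^[n] ⟨id, strictMono_id⟩))
    (strictAnti_nat_of_succ_lt fun n => by simpa only [iterate_succ_apply'] using h _)

theorem exists_continuous_lt_of_continuous_hom {P : ℕ → ℕ → Prop} (hP : ∀ n, ¬ P n n)
    {φ : InfSub → ℕ} (hφ : Continuous φ) (hφP : ∀ X, P (φ X) (φ (shiftS X))) :
    ∃ ψ : InfSub → ℕ, Continuous ψ ∧ ∀ X, P (ψ X) (ψ (shiftS X)) ∧ ψ X < ψ (shiftS X) := by
  have hU : IsOpen {X | φ X < φ (shiftS X)} :=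
    (hφ.prodMk (hφ.comp continuous_shiftS)).isOpen_preimage {p : ℕ × ℕ | p.1 < p.2}
      (isOpen_discrete _)
  obtain ⟨e, he | he⟩ := hU.exists_homogeneous
  · exact ⟨φ ∘ InfSub.image e, hφ.comp (InfSub.continuous_image e), fun X => ⟨hφP _, he X⟩⟩
  · obtain ⟨X, hX⟩ : ∃ X, φ (InfSub.image e X) ≤ φ (InfSub.image e (shiftS X)) :=
      exists_le_apply_shiftS _
    refine absurd (hX.lt_of_ne fun h => hP (φ (InfSub.image e X)) ?_) (he X)
    have hXP := hφP (InfSub.image e X)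
    rwa [shiftS_image, ← h] at hXP

def shiftOrbit (ψ : InfSub → ℕ) (hψ : ∀ X, ψ X < ψ (shiftS X)) (X : InfSub) : InfSub :=
  ⟨fun n => ψ (shiftS^[n] X), strictMono_nat_of_lt_succ fun n => by
    simpa only [iterate_succ_apply'] using hψ _⟩

section shiftOrbit

variable {ψ : InfSub → ℕ} (hψ : ∀ X, ψ X < ψ (shiftS X))

lemma continuous_shiftOrbit (hψc : Continuous ψ) : Continuous (shiftOrbit ψ hψ) :=
  (continuous_pi fun n => hψc.comp (continuous_shiftS.iterate n)).subtype_mk _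

lemma shiftOrbit_shiftS (X : InfSub) :
    shiftOrbit ψ hψ (shiftS X) = shiftS (shiftOrbit ψ hψ X) :=
  Subtype.ext <| funext fun n => congrArg ψ (iterate_succ_apply shiftS n X).symm

lemma shiftOrbit_mem_unfRel {P : ℕ → ℕ → Prop} (hP : ∀ X, P (ψ X) (ψ (shiftS X))) (X : InfSub) :
    shiftOrbit ψ hψ X ∈ UnfRel P := fun i => by
  simpa only [shiftOrbit, iterate_succ_apply'] using hP (shiftS^[i] X)

end shiftOrbit

/-- for an irreflexive relation `P` on ω, there is a continuous
homomorphism from `D_S` to `(ω, P)` iff there is a continuous homomorphism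
from `D_S` to `D_S ↾ Unf(P)`. -/
theorem continuous_hom_iff_hom_to_unf (P : ℕ → ℕ → Prop) (hP : Irreflexive P) :
    (∃ φ : InfSub → ℕ, Continuous φ ∧ ∀ X : InfSub, P (φ X) (φ (shiftS X))) ↔
    (∃ Φ : InfSub → InfSub, Continuous Φ ∧ (∀ X : InfSub, Φ X ∈ UnfRel P) ∧
      ∀ X Y : InfSub, shiftEdge X Y → shiftEdge (Φ X) (Φ Y)) := by
  constructor
  · rintro ⟨φ, hφ, hφP⟩
    obtain ⟨ψ, hψc, hψ⟩ := exists_continuous_lt_of_continuous_hom hP hφ hφP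
    refine ⟨shiftOrbit ψ (fun X => (hψ X).2), continuous_shiftOrbit _ hψc,
      shiftOrbit_mem_unfRel _ fun X => (hψ X).1, fun X Y hXY => ?_⟩
    rw [shiftEdge_iff] at hXY ⊢
    rw [← hXY, shiftOrbit_shiftS]
  · rintro ⟨Φ, hΦc, hΦP, hΦE⟩
    refine ⟨fun X => (Φ X).1 0, (continuous_apply 0).comp (continuous_subtype_val.comp hΦc),
      fun X => ?_⟩
    have hΦS : shiftS (Φ X) = Φ (shiftS X) := shiftEdge_iff.1 (hΦE X _ (shiftEdge_iff.2 rfl))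
    change P ((Φ X).1 0) ((Φ (shiftS X)).1 0)
    rw [← hΦS]
    exact hΦP X 0
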